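/- For every integer 𝒩 ≥ 3, letting π₁ : S → S/I₁ and π₂ : S → S/I₂ be the quotient maps, there is no ring homomorphism f : S/I₁ → S/I₂ with f ∘ π₁ = π₂, and there is no ring homomorphism g : S/I₂ → S/I₁ with g ∘ π₂ = π₁. -/

import Mathlib

open LaurentPolynomial

set_option synthInstance.maxHeartbeats 1000000
set_option maxHeartbeats 1000000
set_option maxSynthPendingDepth 10

/-- `S = ℤ[x^{±1},d^{±1}][w_1,…,w_{𝒩−1}]`, modelled as the multivariate polynomial ring in
`𝒩−1` variables (the variable `j : Fin (𝒩−1)` is `w_{j+1}`) over the Laurent polynomial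
ring in `x` (the outer `T`) over `ℤ[d^{±1}]`. -/
abbrev WRing (𝒩 : ℕ) : Type :=
  MvPolynomial (Fin (𝒩 - 1)) (LaurentPolynomial (LaurentPolynomial ℤ))

/-- The ideal `I₂` of `S`, generated by `∏_{N=2}^{𝒩}(x·d^(N−1) − 1)` together with
`w_j − 1` for `1 ≤ j ≤ 𝒩−1` (defining the 𝒩-th non-weighted unified Jones invariant). -/
noncomputable def I₂ (𝒩 : ℕ) : Ideal (WRing 𝒩) :=
  Ideal.span
    ({MvPolynomial.C (∏ N ∈ Finset.Icc 2 𝒩, ((T 1) * C (T ((N : ℤ) - 1)) - 1))} ∪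
      Set.range (fun j : Fin (𝒩 - 1) => MvPolynomial.X j - 1))

/-- The ideal `I₁ = ⋂_{N=2}^{𝒩} ker φ_N` of `S`, for a family `φ` of specialisations
(defining the 𝒩-th weighted unified Jones invariant). -/
noncomputable def I₁ (𝒩 : ℕ) (φ : ℕ → (WRing 𝒩 →+* LaurentPolynomial ℤ)) : Ideal (WRing 𝒩) :=
  ⨅ N ∈ Finset.Icc 2 𝒩, RingHom.ker (φ N)

/-- The monoid hom `Multiplicative ℤ →* ℤ[d^{±1}]`, `n ↦ d^{-n}`. -/
noncomputable def auxTneg : Multiplicative ℤ →* LaurentPolynomial ℤ where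
  toFun n := T (-(Multiplicative.toAdd n))
  map_one' := by simp
  map_mul' a b := by
    show T (-(Multiplicative.toAdd a + Multiplicative.toAdd b)) = _
    rw [neg_add, T_add]

/-- The ring hom `ℤ[d^{±1}][x^{±1}] →+* ℤ[d^{±1}]` sending `x ↦ d^{-1}`, `d ↦ d`. -/
noncomputable def auxH : LaurentPolynomial (LaurentPolynomial ℤ) →+* LaurentPolynomial ℤ :=
  AddMonoidAlgebra.liftNCRingHom (RingHom.id _) auxTneg (fun _ _ => Commute.all _ _)

lemma auxH_T (n : ℤ) : auxH (T n) = T (-n) := by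
  show AddMonoidAlgebra.liftNC _ _ (AddMonoidAlgebra.single n 1) = _
  rw [AddMonoidAlgebra.liftNC_single]
  simp [auxTneg]

lemma auxH_C (a : LaurentPolynomial ℤ) : auxH (C a) = a := by
  show AddMonoidAlgebra.liftNC _ _ (AddMonoidAlgebra.single 0 a) = _
  rw [AddMonoidAlgebra.liftNC_single]
  simp [auxTneg]

lemma aux_T_ne_one {k : ℤ} (hk : k ≠ 0) : (T k : LaurentPolynomial ℤ) ≠ 1 := by
  intro h
  have h2 : AddMonoidAlgebra.single k (1 : ℤ) = AddMonoidAlgebra.single 0 1 :=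
    h.trans AddMonoidAlgebra.one_def
  rw [AddMonoidAlgebra.single_left_inj one_ne_zero] at h2
  simp [hk] at h2

lemma aux_mem_I₁ (𝒩 : ℕ) (φ : ℕ → (WRing 𝒩 →+* LaurentPolynomial ℤ)) (p : WRing 𝒩) :
    p ∈ I₁ 𝒩 φ ↔ ∀ N ∈ Finset.Icc 2 𝒩, φ N p = 0 := by
  simp [I₁, Submodule.mem_iInf, RingHom.mem_ker]

/-- For every integer `𝒩 ≥ 3`, with `π₁ : S → S/I₁` and `π₂ : S → S/I₂` the
quotient maps, there is no ring homomorphism `f : S/I₁ → S/I₂` with `f ∘ π₁ = π₂`, and no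
ring homomorphism `g : S/I₂ → S/I₁` with `g ∘ π₂ = π₁`.  Here `φ_N : S → ℤ[d^{±1}]` is the
unique ring homomorphism with `φ_N(x) = d^(1−N)`, `φ_N(d) = d`, `φ_N(w_j) = 1` for
`j ≤ N−1` and `φ_N(w_j) = 0` for `j ≥ N`, and `I₁ = ⋂_{N=2}^{𝒩} ker φ_N`. -/
theorem no_ring_hom_between_weighted_and_nonweighted_quotients (𝒩 : ℕ) (h𝒩 : 3 ≤ 𝒩)
    (φ : ℕ → (WRing 𝒩 →+* LaurentPolynomial ℤ))
    (hx : ∀ N ∈ Finset.Icc 2 𝒩, φ N (MvPolynomial.C (T 1)) = T (1 - (N : ℤ)))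
    (hd : ∀ N ∈ Finset.Icc 2 𝒩, φ N (MvPolynomial.C (C (T 1))) = T 1)
    (hw : ∀ N ∈ Finset.Icc 2 𝒩, ∀ j : Fin (𝒩 - 1),
      φ N (MvPolynomial.X j) = if (j : ℕ) + 1 ≤ N - 1 then 1 else 0) :
    (¬ ∃ f : (WRing 𝒩 ⧸ I₁ 𝒩 φ) →+* (WRing 𝒩 ⧸ I₂ 𝒩),
        ∀ p, f (Ideal.Quotient.mk (I₁ 𝒩 φ) p) = Ideal.Quotient.mk (I₂ 𝒩) p) ∧
    (¬ ∃ g : (WRing 𝒩 ⧸ I₂ 𝒩) →+* (WRing 𝒩 ⧸ I₁ 𝒩 φ),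
        ∀ p, g (Ideal.Quotient.mk (I₂ 𝒩) p) = Ideal.Quotient.mk (I₁ 𝒩 φ) p) := by
  -- the last variable `w_{𝒩-1}`
  set lastIdx : Fin (𝒩 - 1) := ⟨𝒩 - 2, by omega⟩ with hlast
  have hv : (lastIdx : ℕ) = 𝒩 - 2 := rfl
  -- the specialisation `ψ : x ↦ d^{-1}, d ↦ d, w_j ↦ 1`, which kills `I₂`
  set ψ : WRing 𝒩 →+* LaurentPolynomial ℤ :=
    MvPolynomial.eval₂Hom auxH (fun _ => 1) with hψ
  have hψkill : I₂ 𝒩 ≤ RingHom.ker ψ := by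
    rw [I₂, Ideal.span_le]
    intro q hq
    rw [SetLike.mem_coe, RingHom.mem_ker]
    rcases hq with hq | ⟨j, rfl⟩
    · rw [Set.mem_singleton_iff] at hq
      subst hq
      rw [hψ, MvPolynomial.eval₂Hom_C, map_prod]
      refine Finset.prod_eq_zero (Finset.mem_Icc.mpr ⟨le_refl 2, by omega⟩) ?_
      rw [map_sub, map_mul, map_one, auxH_T, auxH_C,
        show ((2 : ℕ) : ℤ) - 1 = 1 by norm_num, ← T_add, neg_add_cancel, T_zero, sub_self]
    · simp [hψ]
  -- `p₁ = w_{𝒩-1}·(x·d^{𝒩-1} - 1)` lies in `I₁` but not in `I₂`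
  set p₁ : WRing 𝒩 :=
    MvPolynomial.X lastIdx * MvPolynomial.C (T 1 * C (T ((𝒩 : ℤ) - 1)) - 1) with hp₁def
  have hcast : ((𝒩 - 1 : ℕ) : ℤ) * 1 = (𝒩 : ℤ) - 1 := by omega
  have hCCpow : (MvPolynomial.C (C (T ((𝒩 : ℤ) - 1))) : WRing 𝒩)
      = (MvPolynomial.C (C ((T 1 : LaurentPolynomial ℤ))) : WRing 𝒩) ^ (𝒩 - 1) := by
    rw [← map_pow, ← map_pow, T_pow, hcast]
  have hp₁I₁ : p₁ ∈ I₁ 𝒩 φ := by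
    rw [aux_mem_I₁]
    intro M hM
    have hM' := Finset.mem_Icc.mp hM
    rw [hp₁def, map_mul]
    rcases eq_or_ne M 𝒩 with rfl | hne
    · have hsplit : (MvPolynomial.C (T 1 * C (T ((M : ℤ) - 1)) - 1) : WRing M)
          = MvPolynomial.C ((T 1 : LaurentPolynomial (LaurentPolynomial ℤ)))
            * MvPolynomial.C ((C (T ((M : ℤ) - 1)) : LaurentPolynomial (LaurentPolynomial ℤ))) - 1 := by
        rw [map_sub, map_mul, map_one]
      rw [hsplit, map_sub, map_mul, map_one, hCCpow, map_pow, hx M hM, hd M hM, T_pow,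
        show ((M - 1 : ℕ) : ℤ) * 1 = (M : ℤ) - 1 from hcast, ← T_add,
        show 1 - (M : ℤ) + ((M : ℤ) - 1) = 0 by ring, T_zero, sub_self, mul_zero]
    · rw [hw M hM lastIdx, if_neg (by omega), zero_mul]
  have hp₁I₂ : p₁ ∉ I₂ 𝒩 := by
    intro hmem
    have h0 : ψ p₁ = 0 := hψkill hmem
    rw [hp₁def, map_mul, hψ, MvPolynomial.eval₂Hom_X', MvPolynomial.eval₂Hom_C,
      map_sub, map_mul, map_one, auxH_T, auxH_C, one_mul, ← T_add] at h0
    exact aux_T_ne_one (show (-1 + ((𝒩 : ℤ) - 1)) ≠ 0 by omega) (sub_eq_zero.mp h0)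
  -- `p₂ = w_{𝒩-1} - 1` lies in `I₂` but not in `I₁`
  set p₂ : WRing 𝒩 := MvPolynomial.X lastIdx - 1 with hp₂def
  have hp₂I₂ : p₂ ∈ I₂ 𝒩 :=
    Ideal.subset_span (Set.mem_union_right _ ⟨lastIdx, rfl⟩)
  have hp₂I₁ : p₂ ∉ I₁ 𝒩 φ := by
    rw [aux_mem_I₁]
    intro hall
    have h2 : (2 : ℕ) ∈ Finset.Icc 2 𝒩 := Finset.mem_Icc.mpr ⟨le_refl 2, by omega⟩
    have h3 := hall 2 h2
    rw [hp₂def, map_sub, map_one, hw 2 h2 lastIdx, if_neg (by omega), zero_sub,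
      neg_eq_zero] at h3
    exact one_ne_zero h3
  constructor
  · rintro ⟨f, hf⟩
    apply hp₁I₂
    have h1 : Ideal.Quotient.mk (I₁ 𝒩 φ) p₁ = 0 := Ideal.Quotient.eq_zero_iff_mem.mpr hp₁I₁
    have h2 : Ideal.Quotient.mk (I₂ 𝒩) p₁ = 0 := by rw [← hf, h1, map_zero]
    exact Ideal.Quotient.eq_zero_iff_mem.mp h2
  · rintro ⟨g, hg⟩
    apply hp₂I₁
    have h1 : Ideal.Quotient.mk (I₂ 𝒩) p₂ = 0 := Ideal.Quotient.eq_zero_iff_mem.mpr hp₂I₂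
    have h2 : Ideal.Quotient.mk (I₁ 𝒩 φ) p₂ = 0 := by rw [← hg, h1, map_zero]
    exact Ideal.Quotient.eq_zero_iff_mem.mp h2
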